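/- arXiv:1909.06039 — 2 statements merged into one kernel-verified Lean document; each statement's English description precedes it below -/
import Mathlib

section
/- Let X be a finite nonempty set, let q : X → ℝ≥0 be a probability mass function on X (Σ_{x∈X} q(x) = 1), and let ε : X → ℝ≥0 be a nonnegative bounded function such that Σ_{x∈X} q(x)·ε(x) > 0. Define the target probability mass function p(x) := q(x)(1 + ε(x)) / Σ_{y∈X} q(y)(1 + ε(y)), set c := 1 / Σ_{x∈X} q(x)·ε(x), define the perturbation set X* := {x ∈ X : ε(x) > 0}, and define v(x) := c·q(x)·ε(x). Then v is a probability mass function supported on X*, and p can be written as the two-component mixture p(x) = (c/(1+c))·q(x) + (1/(1+c))·v(x) for all x ∈ X. -/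
/-!
Since `∑ q = 1`, the normalizer of `q (1 + ε)` is `1 + S` with `S = ∑ q ε = 1 / c`, so
`p = q / (1 + S) + q ε / (1 + S)`; the two weights `1 / (1 + S)` and `S / (1 + S)` are
exactly `c / (1 + c)` and `1 / (1 + c)`.
-/

open Finset

theorem sum_mul_one_add_of_sum_eq_one {ι : Type*} [Fintype ι] {q : ι → ℝ}
    (hq : ∑ x, q x = 1) (ε : ι → ℝ) :
    ∑ x, q x * (1 + ε x) = 1 + ∑ x, q x * ε x := by
  simp only [mul_add, mul_one, sum_add_distrib, hq]

theorem mul_one_add_div_eq_mixture {S c : ℝ} (hS : 0 < S) (hc : c = 1 / S) (a b : ℝ) :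
    a * (1 + b) / (1 + S) = c / (1 + c) * a + 1 / (1 + c) * (c * a * b) := by
  subst hc
  field_simp
  ring

theorem perturbation_sampling_mixture_general
    {X : Type*} [Fintype X]
    (q ε : X → ℝ)
    (hq_nonneg : ∀ x, 0 ≤ q x) (hq_sum : ∑ x, q x = 1)
    (hε_nonneg : ∀ x, 0 ≤ ε x)
    (hpos : 0 < ∑ x, q x * ε x)
    (p v : X → ℝ) (c : ℝ)
    (hp : ∀ x, p x = q x * (1 + ε x) / ∑ y, q y * (1 + ε y))
    (hc : c = 1 / ∑ x, q x * ε x)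
    (hv : ∀ x, v x = c * q x * ε x) :
    (∀ x, 0 ≤ v x) ∧ (∑ x, v x = 1) ∧ (∀ x, ¬ 0 < ε x → v x = 0) ∧
    (∀ x, p x = c / (1 + c) * q x + 1 / (1 + c) * v x) := by
  have hc_pos : 0 < c := hc ▸ one_div_pos.mpr hpos
  refine ⟨fun x => ?nonneg, ?sum, fun x hx => ?support, fun x => ?mixture⟩
  case nonneg =>
    rw [hv]
    exact mul_nonneg (mul_nonneg hc_pos.le (hq_nonneg x)) (hε_nonneg x)
  case sum =>
    simp only [hv, mul_assoc]
    rw [← mul_sum, hc, one_div_mul_cancel hpos.ne']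
  case support =>
    rw [hv, le_antisymm (not_lt.mp hx) (hε_nonneg x), mul_zero]
  case mixture =>
    rw [hp, hv, sum_mul_one_add_of_sum_eq_one hq_sum]
    exact mul_one_add_div_eq_mixture hpos hc (q x) (ε x)

/-- Proposition 3 (perturbation sampling): if the target pmf factorizes as
`p x ∝ q x * (1 + ε x)` with `q` a pmf and `ε ≥ 0` with `∑ q x * ε x > 0`, then with
`c = 1 / ∑ q x * ε x` and perturbation pmf `v x = c * q x * ε x`, `v` is a pmf supported
on the set `{x | ε x > 0}` and `p` is the mixture
`p x = (c/(1+c)) * q x + (1/(1+c)) * v x`. -/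
theorem perturbation_sampling_mixture
    {X : Type*} [Fintype X] [Nonempty X]
    (q ε : X → ℝ)
    (hq_nonneg : ∀ x, 0 ≤ q x) (hq_sum : ∑ x, q x = 1)
    (hε_nonneg : ∀ x, 0 ≤ ε x) (hε_bdd : ∃ M : ℝ, ∀ x, ε x ≤ M)
    (hpos : 0 < ∑ x, q x * ε x)
    (p v : X → ℝ) (c : ℝ)
    (hp : ∀ x, p x = q x * (1 + ε x) / ∑ y, q y * (1 + ε y))
    (hc : c = 1 / ∑ x, q x * ε x)
    (hv : ∀ x, v x = c * q x * ε x) :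
    (∀ x, 0 ≤ v x) ∧ (∑ x, v x = 1) ∧ (∀ x, ¬ 0 < ε x → v x = 0) ∧
    (∀ x, p x = c / (1 + c) * q x + 1 / (1 + c) * v x) :=
  perturbation_sampling_mixture_general q ε hq_nonneg hq_sum hε_nonneg hpos p v c hp hc hv
end

section
/- Let V be a finite nonempty set, φ : V → ℝ strictly positive, s : V × V → ℝ nonnegative, and define h(w) := 1 / Σ_{u∈V} φ(u)·exp(s(u,w)) for w ∈ V. Let I be a finite index set, and for each i ∈ I let x_i ∈ V and θ_i ∈ (0,1). Then for every v ∈ V: Π_{i∈I} [ (1 − θ_i)·1{x_i = v} + θ_i·h(v)·φ(x_i)·exp(s(x_i, v)) ] = ( Π_{i∈I} θ_i·φ(x_i) ) · h(v)^{|I|} · Π_{i∈I} [ exp(s(x_i, v)) + (θ_i^{−1} − 1)·1{x_i = v} / (φ(x_i)·h(x_i)) ]. -/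
/-! Each factor is rewritten separately: pulling out `θ i * φ (x i) * h v` leaves
`exp (s (x i) v)` plus the indicator term, in which `h v` may be replaced by `h (x i)`
because the indicator vanishes unless `x i = v`. The only analytic input is that the
normaliser `h` is positive, so that the division by `φ (x i) * h (x i)` can be undone. -/

open Finset

lemma one_div_sum_mul_exp_pos {V : Type*} [Fintype V] [Nonempty V]
    (φ : V → ℝ) (hφ : ∀ v, 0 < φ v) (g : V → ℝ) :
    0 < 1 / ∑ u, φ u * Real.exp (g u) :=
  one_div_pos.mpr <| sum_pos (fun u _ => mul_pos (hφ u) (Real.exp_pos _)) univ_nonempty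

lemma mixture_term_eq_mul_perturbation {V : Type*} [DecidableEq V]
    (φ h : V → ℝ) (x v : V) (θ e : ℝ) (hθ : θ ≠ 0) (hφx : φ x ≠ 0) (hhx : h x ≠ 0) :
    (1 - θ) * (if x = v then (1:ℝ) else 0) + θ * (h v * φ x * e)
      = θ * φ x * h v * (e + (θ⁻¹ - 1) * (if x = v then (1:ℝ) else 0) / (φ x * h x)) := by
  split_ifs with hxv
  · subst hxv
    field_simp
    ring
  · ring

theorem entity_attribute_factorization_general
    {V : Type*} [Fintype V] [DecidableEq V]
    (φ : V → ℝ) (hφ : ∀ v, 0 < φ v)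
    (s : V → V → ℝ)
    (h : V → ℝ) (hh : ∀ w, h w = 1 / ∑ u, φ u * Real.exp (s u w))
    {I : Type*} [Fintype I]
    (x : I → V) (θ : I → ℝ) (hθ : ∀ i, 0 < θ i ∧ θ i < 1) :
    ∀ v : V,
      (∏ i : I, ((1 - θ i) * (if x i = v then (1:ℝ) else 0) +
          θ i * (h v * φ (x i) * Real.exp (s (x i) v))))
        =
      (∏ i : I, θ i * φ (x i)) * (h v) ^ (Fintype.card I) *
        ∏ i : I, (Real.exp (s (x i) v) +
          ((θ i)⁻¹ - 1) * (if x i = v then (1:ℝ) else 0) / (φ (x i) * h (x i))) := by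
  intro v
  have hh_ne : ∀ i, h (x i) ≠ 0 := fun i => by
    have : Nonempty V := ⟨x i⟩
    exact hh (x i) ▸ (one_div_sum_mul_exp_pos φ hφ _).ne'
  rw [prod_congr rfl fun i _ =>
      mixture_term_eq_mul_perturbation φ h (x i) v (θ i) _ (hθ i).1.ne'
        (hφ _).ne' (hh_ne i),
    prod_mul_distrib, prod_mul_distrib, prod_const, card_univ]

/-- Factorization for perturbation sampling of the entity-attribute update
(Eqs. 17–20, Section 6.3 of d-blink): the conditional-likelihood product over the
linked records factorizes into a base term `(∏ i, θ i * φ (x i)) * (h v)^|I|` times a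
perturbation factor. -/
theorem entity_attribute_factorization
    {V : Type*} [Fintype V] [Nonempty V] [DecidableEq V]
    (φ : V → ℝ) (hφ : ∀ v, 0 < φ v)
    (s : V → V → ℝ) (hs : ∀ v w, 0 ≤ s v w)
    (h : V → ℝ) (hh : ∀ w, h w = 1 / ∑ u, φ u * Real.exp (s u w))
    {I : Type*} [Fintype I]
    (x : I → V) (θ : I → ℝ) (hθ : ∀ i, 0 < θ i ∧ θ i < 1) :
    ∀ v : V,
      (∏ i : I, ((1 - θ i) * (if x i = v then (1:ℝ) else 0) +
          θ i * (h v * φ (x i) * Real.exp (s (x i) v))))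
        =
      (∏ i : I, θ i * φ (x i)) * (h v) ^ (Fintype.card I) *
        ∏ i : I, (Real.exp (s (x i) v) +
          ((θ i)⁻¹ - 1) * (if x i = v then (1:ℝ) else 0) / (φ (x i) * h (x i))) :=
  entity_attribute_factorization_general φ hφ s h hh x θ hθ
end
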